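/- Under the Farey configuration (integers k ≥ 1, 1 ≤ l ≤ k, c_1 ≥ 1, c_2,…,c_l ≥ 2, c_l > 2, and c_{l+1} = ⋯ = c_k = 2), the right q-deformed Euler continuants satisfy the q-deformed Farey sum identities E^♯_k(c_1,…,c_k)_q = E^♯_l(c_1,…,c_{l−1}, c_l − 1)_q + q^{c_k−1}·E^♯_{k−1}(c_1,…,c_{k−1})_q and E^♯_{k−1}(c_2,…,c_k)_q = E^♯_{l−1}(c_2,…,c_{l−1}, c_l − 1)_q + q^{c_k−1}·E^♯_{k−2}(c_2,…,c_{k−1})_q; that is, if α = [[c_1,…,c_k]] is the Farey sum of β = [[c_1,…,c_l − 1]] and γ = [[c_1,…,c_{k−1}]], then R^♯_α = R^♯_β + q^{c_k−1}R^♯_γ and S^♯_α = S^♯_β + q^{c_k−1}S^♯_γ. -/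

import Mathlib

noncomputable section

/-- The field ℚ(q) of rational functions over ℚ. -/
abbrev K : Type := RatFunc ℚ

/-- The variable q. -/
def q : K := RatFunc.X

/-- Right q-integer `[n]^♯` with deformation parameter `x`. -/
def qsX (x : K) (n : ℤ) : K := (1 - x ^ n) / (1 - x)

/-- Left q-integer `[n]^♭` with deformation parameter `x`. -/
def qfX (x : K) (n : ℤ) : K := (1 - x ^ (n - 1) + x ^ n - x ^ (n + 1)) / (1 - x)

/-- Right q-integer `[n]^♯_q`. -/
def qs (n : ℤ) : K := qsX q n

/-- Left q-integer `[n]^♭_q`. -/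
def qf (n : ℤ) : K := qfX q n

/-- Right q-deformed Euler continuant `E^♯` (first-row expansion of the
tridiagonal determinant), with parameter `x`. -/
def EsharpX (x : K) : List ℤ → K
  | [] => 1
  | [c] => qsX x c
  | c :: d :: rest => qsX x c * EsharpX x (d :: rest) - x ^ (c - 1) * EsharpX x rest

/-- Left q-deformed Euler continuant `E^♭` (first-row expansion of the
tridiagonal determinant whose (k,k) entry is the left q-integer), with parameter `x`. -/
def EflatX (x : K) : List ℤ → K
  | [] => 1
  | [c] => qfX x c
  | c :: d :: rest => qsX x c * EflatX x (d :: rest) - x ^ (c - 1) * EflatX x rest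

def Esharp (L : List ℤ) : K := EsharpX q L

def Eflat (L : List ℤ) : K := EflatX q L

/-- `E^♯_{j-1}(d_2,…,d_j)` for the input list `(d_1,…,d_j)`, with the
convention `E^♯_{-1}() = 0` when the list is empty. -/
def EsharpD : List ℤ → K
  | [] => 0
  | _ :: rest => Esharp rest

/-- `E^♭_{j-1}(d_2,…,d_j)` for the input list `(d_1,…,d_j)`, with the
convention `E^♭_{-1}() = 1 - q` when the list is empty. -/
def EflatD : List ℤ → K
  | [] => 1 - q
  | _ :: rest => Eflat rest

/-- Left q-deformed negative continued fraction `[[c_1,…,c_k]]^♭_q`. -/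
def nflat : List ℤ → K
  | [] => 0
  | [c] => qf c
  | c :: d :: rest => qs c - q ^ (c - 1) / nflat (d :: rest)

/-- Right q-deformed negative continued fraction `[[c_1,…,c_k]]^♯_q`. -/
def nsharp : List ℤ → K
  | [] => 0
  | [c] => qs c
  | c :: d :: rest => qs c - q ^ (c - 1) / nsharp (d :: rest)

/-- Left q-deformed regular continued fraction, with alternating parameter `x`, `x⁻¹`. -/
def regFlatX : K → List ℤ → K
  | _, [] => 0
  | x, [a] => qfX x a
  | x, a :: d :: rest => qsX x a + x ^ a / regFlatX x⁻¹ (d :: rest)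

/-- Left q-deformed regular continued fraction `[a_1,…,a_{2m}]^♭_q`. -/
def regFlat (L : List ℤ) : K := regFlatX q L

/-- Classical negative continued fraction `[[c_1,…,c_k]] ∈ ℚ`. -/
def negCF : List ℤ → ℚ
  | [] => 0
  | [c] => c
  | c :: d :: rest => c - 1 / negCF (d :: rest)

/-- Classical regular continued fraction `[a_1,…,a_{2m}] ∈ ℚ`. -/
def regCF : List ℤ → ℚ
  | [] => 0
  | [a] => a
  | a :: d :: rest => a + 1 / regCF (d :: rest)

/-- The matrix σ_{1,q} as an invertible 2×2 matrix over ℚ(q). -/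
def σ1 : (Matrix (Fin 2) (Fin 2) K)ˣ where
  val := !![q⁻¹, -q⁻¹; 0, 1]
  inv := !![q, 1; 0, 1]
  val_inv := by
    have hq : (q : K) ≠ 0 := RatFunc.X_ne_zero
    ext i j
    fin_cases i <;> fin_cases j <;>
      simp [Matrix.mul_apply, Fin.sum_univ_two, inv_mul_cancel₀ hq]
  inv_val := by
    have hq : (q : K) ≠ 0 := RatFunc.X_ne_zero
    ext i j
    fin_cases i <;> fin_cases j <;>
      simp [Matrix.mul_apply, Fin.sum_univ_two, mul_inv_cancel₀ hq]

/-- The matrix σ_{2,q} as an invertible 2×2 matrix over ℚ(q). -/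
def σ2 : (Matrix (Fin 2) (Fin 2) K)ˣ where
  val := !![1, 0; 1, q⁻¹]
  inv := !![1, 0; -q, q]
  val_inv := by
    have hq : (q : K) ≠ 0 := RatFunc.X_ne_zero
    ext i j
    fin_cases i <;> fin_cases j <;>
      simp [Matrix.mul_apply, Fin.sum_univ_two, inv_mul_cancel₀ hq]
  inv_val := by
    have hq : (q : K) ≠ 0 := RatFunc.X_ne_zero
    ext i j
    fin_cases i <;> fin_cases j <;>
      simp [Matrix.mul_apply, Fin.sum_univ_two, mul_inv_cancel₀ hq]

/-- The matrix S_q as an invertible 2×2 matrix over ℚ(q). -/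
def Sq : (Matrix (Fin 2) (Fin 2) K)ˣ where
  val := !![0, -q⁻¹; 1, 0]
  inv := !![0, 1; -q, 0]
  val_inv := by
    have hq : (q : K) ≠ 0 := RatFunc.X_ne_zero
    ext i j
    fin_cases i <;> fin_cases j <;>
      simp [Matrix.mul_apply, Fin.sum_univ_two, inv_mul_cancel₀ hq]
  inv_val := by
    have hq : (q : K) ≠ 0 := RatFunc.X_ne_zero
    ext i j
    fin_cases i <;> fin_cases j <;>
      simp [Matrix.mul_apply, Fin.sum_univ_two, mul_inv_cancel₀ hq]

/-- The product σ_{1,q}^{-c_1}·S_q·σ_{1,q}^{-c_2}·S_q⋯σ_{1,q}^{-c_k}·S_q. -/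
def prodCS : List ℤ → (Matrix (Fin 2) (Fin 2) K)ˣ
  | [] => 1
  | c :: rest => σ1 ^ (-c) * Sq * prodCS rest

/-- The product σ_{1,q}^{-a_1}·σ_{2,q}^{a_2}⋯σ_{1,q}^{-a_{2m-1}}·σ_{2,q}^{a_{2m}}. -/
def prodReg : List ℤ → (Matrix (Fin 2) (Fin 2) K)ˣ
  | [] => 1
  | [a] => σ1 ^ (-a)
  | a :: b :: rest => σ1 ^ (-a) * σ2 ^ b * prodReg rest

/-- The sum a_2 + a_4 + ⋯ of the even-indexed entries. -/
def evenSum : List ℤ → ℤ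
  | [] => 0
  | [_] => 0
  | _ :: b :: rest => b + evenSum rest

/-- Möbius action of a 2×2 matrix on ℚ(q). -/
def mobius (A : Matrix (Fin 2) (Fin 2) K) (x : K) : K :=
  (A 0 0 * x + A 0 1) / (A 1 0 * x + A 1 1)


-- ===== auxiliary lemmas =====

lemma my_q_ne_zero : (q : K) ≠ 0 := RatFunc.X_ne_zero

lemma my_q_ne_one : (q : K) ≠ 1 := by
  intro h
  have := congrArg RatFunc.num h
  rw [q, RatFunc.num_X, RatFunc.num_one] at this
  exact Polynomial.X_ne_C (1:ℚ) (by simpa using this)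

lemma my_one_sub_q : (1 : K) - q ≠ 0 := sub_ne_zero.mpr (Ne.symm my_q_ne_one)

lemma my_qs_sub_one (c : ℤ) : qs c = qs (c-1) + q ^ (c-1) := by
  have hq : (q:K) ^ c = q ^ (c-1) * q := by
    rw [← zpow_add_one₀ my_q_ne_zero]; norm_num
  simp only [qs, qsX]
  rw [div_add' _ _ _ my_one_sub_q, div_eq_div_iff my_one_sub_q my_one_sub_q, hq]
  ring

lemma my_qs_two : (qs 2 : K) = 1 + q := by
  have hq : (q:K) ^ (2:ℤ) = q * q := by
    rw [show (2:ℤ) = 1 + 1 by norm_num, zpow_add₀ my_q_ne_zero, zpow_one]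
  simp only [qs, qsX]
  rw [hq, div_eq_iff my_one_sub_q]
  ring

lemma my_qs_one : (qs 1 : K) = 1 := by
  simp only [qs, qsX, zpow_one]
  exact div_self my_one_sub_q

lemma Esharp_nil : Esharp [] = 1 := rfl

lemma Esharp_single (c : ℤ) : Esharp [c] = qs c := rfl

lemma Esharp_cons (c d : ℤ) (L : List ℤ) :
    Esharp (c :: d :: L) = qs c * Esharp (d :: L) - q ^ (c - 1) * Esharp L := rfl

lemma my_getLast!_concat (l : List ℤ) (a : ℤ) : (l ++ [a]).getLast! = a := by
  cases l with
  | nil => rfl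
  | cons b t => rw [List.cons_append, List.getLast!_cons_eq_getLastD, List.getLastD_concat]

lemma my_getLast!_cons (a : ℤ) (l : List ℤ) (h : l ≠ []) :
    (a :: l).getLast! = l.getLast! := by
  cases l with
  | nil => exact absurd rfl h
  | cons b t => rw [List.getLast!_cons_eq_getLastD, List.getLastD_cons, List.getLast!_cons_eq_getLastD]

lemma my_dropLast_cons (a : ℤ) (l : List ℤ) (h : l ≠ []) :
    (a :: l).dropLast = a :: l.dropLast := by
  cases l with
  | nil => exact absurd rfl h
  | cons b t => rfl

theorem my_tailrec : ∀ (M : List ℤ), M ≠ [] → ∀ c : ℤ,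
    Esharp (M ++ [c]) = qs c * Esharp M - q ^ (M.getLast! - 1) * Esharp M.dropLast
  | [], h, _ => absurd rfl h
  | [d], _, c => by
      simp only [List.cons_append, List.nil_append, Esharp_cons, Esharp_single, Esharp_nil,
        List.getLast!_cons_eq_getLastD, List.getLastD, List.dropLast_singleton]
      ring
  | [d, e], _, c => by
      simp only [List.cons_append, List.nil_append, Esharp_cons, Esharp_single, Esharp_nil,
        List.getLast!_cons_eq_getLastD, List.getLastD_cons, List.getLastD, List.dropLast_cons₂,
        List.dropLast_singleton, List.getLast_singleton]
      ring
  | d :: e :: f :: rest, _, c => by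
      have h1 := my_tailrec (e :: f :: rest) (by simp) c
      have h2 := my_tailrec (f :: rest) (by simp) c
      simp only [List.cons_append, List.getLast!_cons_eq_getLastD, List.getLastD_cons,
        List.dropLast_cons₂] at h1 h2 ⊢
      have e1 : Esharp (d :: e :: f :: (rest ++ [c]))
          = qs d * Esharp (e :: f :: (rest ++ [c])) - q ^ (d - 1) * Esharp (f :: (rest ++ [c])) :=
        Esharp_cons d e _
      have e2 : Esharp (d :: e :: f :: rest)
          = qs d * Esharp (e :: f :: rest) - q ^ (d - 1) * Esharp (f :: rest) :=
        Esharp_cons d e _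
      have e3 : Esharp (d :: e :: (f :: rest).dropLast)
          = qs d * Esharp (e :: (f :: rest).dropLast) - q ^ (d - 1) * Esharp ((f :: rest).dropLast) :=
        Esharp_cons d e _
      linear_combination e1 + qs d * h1 - q ^ (d - 1) * h2 - qs c * e2
        + q ^ (rest.getLastD f - 1) * e3

lemma my_farey_num (M : List ℤ) (c : ℤ) : ∀ n : ℕ,
    Esharp (M ++ c :: List.replicate n 2)
      = Esharp (M ++ [c - 1])
        + q ^ ((M ++ c :: List.replicate n 2).getLast! - 1)
          * Esharp ((M ++ c :: List.replicate n 2).dropLast)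
  | 0 => by
      simp only [List.replicate]
      rcases eq_or_ne M [] with rfl | hM
      · simp only [List.nil_append, List.getLast!_cons_eq_getLastD, List.getLastD, List.dropLast_singleton,
          Esharp_single, Esharp_nil]
        linear_combination my_qs_sub_one c
      · have t1 := my_tailrec M hM c
        have t2 := my_tailrec M hM (c - 1)
        have hg : (M ++ [c]).getLast! = c := my_getLast!_concat M c
        have hd : (M ++ [c]).dropLast = M := List.dropLast_concat
        rw [show M ++ [c] = M ++ c :: [] from rfl] at hg hd t1
        rw [show M ++ [c-1] = M ++ (c-1) :: [] from rfl] at t2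
        rw [hg, hd]
        linear_combination t1 - t2 + Esharp M * my_qs_sub_one c
  | n + 1 => by
      have key := my_farey_num M c n
      have hN : M ++ c :: List.replicate n 2 ≠ [] := by simp
      have t := my_tailrec (M ++ c :: List.replicate n 2) hN 2
      have hl : M ++ c :: List.replicate (n+1) 2 = (M ++ c :: List.replicate n 2) ++ [2] := by
        rw [List.replicate_succ']
        simp
      rw [hl, my_getLast!_concat, List.dropLast_concat]
      rw [show (2:ℤ) - 1 = 1 by norm_num, zpow_one]
      linear_combination t + key + Esharp (M ++ c :: List.replicate n 2) * my_qs_two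

lemma my_rep2 : ∀ m : ℕ, Esharp (List.replicate (m+1) 2) = 1 + q * Esharp (List.replicate m 2)
  | 0 => by
      simp only [List.replicate, Esharp_single, Esharp_nil, my_qs_two]
      ring
  | m + 1 => by
      have ih := my_rep2 m
      rw [List.replicate_succ] at ih ⊢
      rw [List.replicate_succ]
      have ec : Esharp (2 :: 2 :: List.replicate m 2)
          = qs 2 * Esharp (2 :: List.replicate m 2) - q ^ ((2:ℤ) - 1) * Esharp (List.replicate m 2) :=
        Esharp_cons 2 2 _
      rw [show (2:ℤ) - 1 = 1 by norm_num, zpow_one] at ec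
      linear_combination ec + Esharp (2 :: List.replicate m 2) * my_qs_two + ih

/-- the q-deformed Farey sum identities for right q-deformed Euler
continuants (numerator and denominator).  Here `L = (c_1,…,c_l)` with c_1 ≥ 1,
c_2,…,c_l ≥ 2, c_l > 2, and the full sequence is `L ++ (2,…,2)` with `n = k - l`
copies of 2; the denominator uses the convention `E^♯_{-1}() = 0`. -/
theorem Esharp_farey (L : List ℤ) (hL : L ≠ [])
    (h1 : 1 ≤ L.head!) (h2 : ∀ x ∈ L.tail, 2 ≤ x) (h3 : 2 < L.getLast!) (n : ℕ) :
    Esharp (L ++ List.replicate n 2)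
      = Esharp (L.dropLast ++ [L.getLast! - 1])
        + q ^ ((L ++ List.replicate n 2).getLast! - 1)
          * Esharp ((L ++ List.replicate n 2).dropLast)
      ∧
    EsharpD (L ++ List.replicate n 2)
      = EsharpD (L.dropLast ++ [L.getLast! - 1])
        + q ^ ((L ++ List.replicate n 2).getLast! - 1)
          * EsharpD ((L ++ List.replicate n 2).dropLast) := by
  clear h1 h2 h3
  induction L using List.reverseRecOn with
  | nil => exact absurd rfl hL
  | append_singleton M c _ =>
    have hg : (M ++ [c]).getLast! = c := my_getLast!_concat M c
    have hd : (M ++ [c]).dropLast = M := List.dropLast_concat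
    have hass : (M ++ [c]) ++ List.replicate n 2 = M ++ c :: List.replicate n 2 := by
      rw [List.append_assoc]; rfl
    rw [hg, hd, hass]
    constructor
    · exact my_farey_num M c n
    · cases M with
      | nil =>
        simp only [List.nil_append]
        cases n with
        | zero =>
          simp only [List.replicate, List.getLast!_cons_eq_getLastD, List.getLastD, List.dropLast_singleton,
            EsharpD, Esharp_nil]
          ring
        | succ m =>
          have h4 : (c :: List.replicate (m+1) 2).getLast! = 2 := by
            rw [my_getLast!_cons _ _ (by simp), List.replicate_succ', my_getLast!_concat]
          have h5 : (c :: List.replicate (m+1) 2).dropLast = c :: List.replicate m 2 := by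
            conv_lhs => rw [List.replicate_succ', ← List.cons_append, List.dropLast_concat]
          rw [h4, h5]
          simp only [EsharpD, Esharp_nil]
          rw [show (2:ℤ) - 1 = 1 by norm_num, zpow_one]
          linear_combination my_rep2 m
      | cons h t =>
        have ht : t ++ c :: List.replicate n 2 ≠ [] := by simp
        have ht1 : t ++ [c-1] ≠ [] := by simp
        have e0 : (h :: t) ++ c :: List.replicate n 2 = h :: (t ++ c :: List.replicate n 2) := rfl
        have e1 : (h :: t) ++ [c-1] = h :: (t ++ [c-1]) := rfl
        rw [e0, e1, my_getLast!_cons _ _ ht, my_dropLast_cons _ _ ht]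
        simp only [EsharpD]
        exact my_farey_num t c n
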